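/- arXiv:math/9406217 — 5 statements merged into one kernel-verified Lean document; each statement's English description precedes it below -/
import Mathlib

section
/- Let K be a metric space and let f : K → ℂ be a bounded function belonging to D(K). Then: (b) the function |f| belongs to D(K) and ‖|f|‖_D ≤ ‖f‖_D; and (c) if inf_{k∈K} |f(k)| > 0, then the function 1/f belongs to D(K). -/
open Filter Set Topology ENNReal

noncomputable section

universe u v

/-- The `ℓ¹`-type bound `sup_k Σ_j |φ_j(k)|` of a sequence of functions, in `ℝ≥0∞`. -/
def DBound {K : Type u} [MetricSpace K] (φ : ℕ → K → ℂ) : ℝ≥0∞ :=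
  ⨆ k : K, ∑' j : ℕ, (‖φ j k‖₊ : ℝ≥0∞)

/-- `φ` is a sequence of continuous functions summing pointwise to `f`. -/
def IsDRep {K : Type u} [MetricSpace K] (f : K → ℂ) (φ : ℕ → K → ℂ) : Prop :=
  (∀ j, Continuous (φ j)) ∧ ∀ k, HasSum (fun j => φ j k) (f k)

/-- `f` belongs to `D(K)`: it has a representing sequence with finite bound. -/
def MemD {K : Type u} [MetricSpace K] (f : K → ℂ) : Prop :=
  ∃ φ : ℕ → K → ℂ, IsDRep f φ ∧ DBound φ < ⊤

/-- The `D`-norm of `f`, equal to `⊤` when `f ∉ D(K)`. -/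
def DNorm {K : Type u} [MetricSpace K] (f : K → ℂ) : ℝ≥0∞ :=
  ⨅ (φ : ℕ → K → ℂ) (_ : IsDRep f φ), DBound φ

/-- The quotient `D`-seminorm: distance in `D`-norm to the bounded continuous functions. -/
def qDNorm {K : Type u} [MetricSpace K] (f : K → ℂ) : ℝ≥0∞ :=
  ⨅ (φ : K → ℂ) (_ : Continuous φ ∧ ∃ C : ℝ, ∀ k, ‖φ k‖ ≤ C), DNorm (f - φ)

/-- Upper semicontinuous envelope of `g`, computed relative to the subspace `L`. -/
def uscEnvWithin {K : Type u} [MetricSpace K] (L : Set K) (g : K → ℝ≥0∞) (x : K) : ℝ≥0∞ :=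
  ⨅ U ∈ 𝓝 x, ⨆ y ∈ U ∩ L, g y

/-- `limsup_{y→x, y ∈ L} (|f(y) - f(x)| + g(y))` (non-exclusive limsup, relative to `L`). -/
def toscSuccWithin {K : Type u} [MetricSpace K] (f : K → ℂ) (L : Set K)
    (g : K → ℝ≥0∞) (x : K) : ℝ≥0∞ :=
  ⨅ U ∈ 𝓝 x, ⨆ y ∈ U ∩ L, ((‖f y - f x‖₊ : ℝ≥0∞) + g y)

/-- The finite oscillations `osc_n (f|_L)` of `f` restricted to `L`. -/
def oscNWithin {K : Type u} [MetricSpace K] (f : K → ℂ) (L : Set K) : ℕ → K → ℝ≥0∞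
  | 0 => fun _ => 0
  | n + 1 => uscEnvWithin L (toscSuccWithin f L (oscNWithin f L n))

/-- The oscillation `osc (f|_L)` of `f` restricted to `L`. -/
def oscWithin {K : Type u} [MetricSpace K] (f : K → ℂ) (L : Set K) : K → ℝ≥0∞ :=
  oscNWithin f L 1

/-- The finite oscillations `osc_n f`. -/
def oscN {K : Type u} [MetricSpace K] (f : K → ℂ) (n : ℕ) : K → ℝ≥0∞ :=
  oscNWithin f Set.univ n

/-- `osc_ω (f|_L)`: the usc envelope (relative to `L`) of `sup_n osc_n (f|_L)`. -/
def oscOmegaWithin {K : Type u} [MetricSpace K] (f : K → ℂ) (L : Set K) : K → ℝ≥0∞ :=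
  uscEnvWithin L (fun x => ⨆ n : ℕ, oscNWithin f L n x)

/-- `osc_ω f`. -/
def oscOmega {K : Type u} [MetricSpace K] (f : K → ℂ) : K → ℝ≥0∞ :=
  oscOmegaWithin f Set.univ

/-- `osc_{ω+1} (f|_L)`. -/
def oscOmegaSuccWithin {K : Type u} [MetricSpace K] (f : K → ℂ) (L : Set K) : K → ℝ≥0∞ :=
  uscEnvWithin L (toscSuccWithin f L (oscOmegaWithin f L))

/-- The oscillation sets `os_n(f, (ε_i))` (here `ε : ℕ → ℝ` is 0-indexed, so `ε 0 = ε_1`). -/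
def osSets {K : Type u} [MetricSpace K] (f : K → ℂ) (ε : ℕ → ℝ) : ℕ → Set K
  | 0 => Set.univ
  | n + 1 => {x ∈ osSets f ε n | ENNReal.ofReal (ε n) ≤ oscWithin f (osSets f ε n) x}

/-- The `ε`-Baire index `i_B(f, ε) = sup {n : os_n(f,ε) ≠ ∅} ∈ ℕ∞`. -/
def baireIndexE {K : Type u} [MetricSpace K] (f : K → ℂ) (ε : ℝ) : ℕ∞ :=
  ⨆ (n : ℕ) (_ : (osSets f (fun _ => ε) n).Nonempty), (n : ℕ∞)

/-- The Baire index `i_B(f) = sup_{ε > 0} i_B(f,ε)`. -/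
def baireIndexTotal {K : Type u} [MetricSpace K] (f : K → ℂ) : ℕ∞ :=
  ⨆ (ε : ℝ) (_ : 0 < ε), baireIndexE f ε

/-- The sets `os_n(f, ω, ε)` defined using `osc_ω` of successive restrictions. -/
def osOmegaSets {K : Type u} [MetricSpace K] (f : K → ℂ) (ε : ℝ≥0∞) : ℕ → Set K
  | 0 => Set.univ
  | n + 1 => {x ∈ osOmegaSets f ε n | ε ≤ oscOmegaWithin f (osOmegaSets f ε n) x}

/-- The index `i(f, ω, ε)`, valued in `ℝ≥0∞`. -/
def iOmega {K : Type u} [MetricSpace K] (f : K → ℂ) (ε : ℝ≥0∞) : ℝ≥0∞ :=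
  ⨆ (n : ℕ) (_ : (osOmegaSets f ε n).Nonempty), (n : ℝ≥0∞)

/-- The transfinite oscillations `osc_β f`. -/
def oscOrd {K : Type u} [MetricSpace K] (f : K → ℂ) (β : Ordinal.{v}) : K → ℝ≥0∞ :=
  Ordinal.limitRecOn β (fun _ => 0)
    (fun _ ih => uscEnvWithin Set.univ (toscSuccWithin f Set.univ ih))
    (fun γ _ ih => uscEnvWithin Set.univ (fun x => ⨆ (α : Ordinal) (h : α < γ), ih α h x))

/-- The weight of a topological space: least cardinality of a basis. -/
def tweight (K : Type u) [TopologicalSpace K] : Cardinal.{u} :=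
  ⨅ (B : Set (Set K)) (_ : TopologicalSpace.IsTopologicalBasis B), Cardinal.mk B

/-- `f` belongs to `B_{1/4}(K)`. -/
def MemB14 {K : Type u} [MetricSpace K] (f : K → ℂ) : Prop :=
  ∃ (g : ℕ → K → ℂ) (lam : ℝ≥0∞), lam < ⊤ ∧
    (∀ n, MemD (g n) ∧ DNorm (g n) ≤ lam) ∧ TendstoUniformly g f atTop

/-- The `B_{1/4}`-norm of `f`. -/
def B14Norm {K : Type u} [MetricSpace K] (f : K → ℂ) : ℝ≥0∞ :=
  ⨅ (lam : ℝ≥0∞) (_ : ∃ g : ℕ → K → ℂ,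
    (∀ n, MemD (g n) ∧ DNorm (g n) ≤ lam) ∧ TendstoUniformly g f atTop), lam

/-- `f` belongs to `SD(K)`: the closure in `D`-norm of the simple `D`-functions. -/
def MemSD {K : Type u} [MetricSpace K] (f : K → ℂ) : Prop :=
  MemD f ∧ ∀ ε : ℝ≥0∞, 0 < ε →
    ∃ φ : K → ℂ, (Set.range φ).Finite ∧ MemD φ ∧ DNorm (f - φ) < ε

/-- The algebra of sets generated by the open subsets of `K`. -/
inductive DAlg (K : Type u) [TopologicalSpace K] : Set K → Prop
  | basic (U : Set K) : IsOpen U → DAlg K U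
  | compl (A : Set K) : DAlg K A → DAlg K Aᶜ
  | union (A B : Set K) : DAlg K A → DAlg K B → DAlg K (A ∪ B)

/-- `W` is a difference of two closed sets. -/
def IsDCS {K : Type u} [TopologicalSpace K] (W : Set K) : Prop :=
  ∃ A B : Set K, IsClosed A ∧ IsClosed B ∧ W = A \ B

/-- The boundary of `A ∩ L` relative to the subspace `L`. -/
def relBoundary {K : Type u} [TopologicalSpace K] (L A : Set K) : Set K :=
  L ∩ closure (A ∩ L) ∩ closure (L \ A)

/-- The iterated boundaries `∂^n A` (with `∂^0 A = K`). -/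
def iterBoundary {K : Type u} [TopologicalSpace K] (A : Set K) : ℕ → Set K
  | 0 => Set.univ
  | n + 1 => relBoundary (iterBoundary A n) A

/-- The Baire index `i(A)` of a set: the largest `n` with `∂^n A ≠ ∅`. -/
def setIndex {K : Type u} [TopologicalSpace K] (A : Set K) : ℕ∞ :=
  ⨆ (n : ℕ) (_ : (iterBoundary A n).Nonempty), (n : ℕ∞)

/-- The iterated derived sets `K^{(n)}` of the space `K`. -/
def derivedIter (K : Type u) [TopologicalSpace K] : ℕ → Set K
  | 0 => Set.univ
  | n + 1 => {x | AccPt x (Filter.principal (derivedIter K n))}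

end

/-!
If continuous `φ_j` sum to `f` with partial sums `S_n`, and `F : ℂ → ℂ` is `L`-Lipschitz, then the
constant `F 0` followed by the differences `F ∘ S_{n+1} - F ∘ S_n` is a sequence of continuous
functions summing to `F ∘ f`, whose terms are bounded by `L |φ_n|`. Hence `D(K)` is stable under
Lipschitz maps with `‖F ∘ f‖_D ≤ |F 0| + L ‖f‖_D`, and `F = |·|` gives (b). Cauchy products make
`D(K)` an algebra, and for (c) `1/f = conj f · h(f)²` with `h z = 1 / max |z| δ`, which is
`δ⁻²`-Lipschitz and equals `1/|z|` where `|z| ≥ δ`.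
-/

open scoped NNReal

section

variable {K : Type*} [MetricSpace K]

lemma DBound_eq_iSup_tsum_enorm (φ : ℕ → K → ℂ) : DBound φ = ⨆ k, ∑' j, ‖φ j k‖ₑ := rfl

lemma IsDRep.summable_norm {f : K → ℂ} {φ : ℕ → K → ℂ} (h : IsDRep f φ) (k : K) :
    Summable fun j => ‖φ j k‖ :=
  summable_norm_iff.mpr (h.2 k).summable

def telescope {α : Type*} [AddGroup α] (T : ℕ → α) : ℕ → α
  | 0 => T 0
  | n + 1 => T (n + 1) - T n

lemma sum_range_succ_telescope {α : Type*} [AddCommGroup α] (T : ℕ → α) (n : ℕ) :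
    ∑ i ∈ Finset.range (n + 1), telescope T i = T n := by
  induction n with
  | zero => simp [telescope]
  | succ n ih => rw [Finset.sum_range_succ, ih, telescope]; abel

lemma hasSum_telescope {E : Type*} [NormedAddCommGroup E] [CompleteSpace E] {T : ℕ → E} {a : E}
    (hT : Tendsto T atTop (𝓝 a)) (hs : Summable fun n => ‖telescope T n‖) :
    HasSum (telescope T) a := by
  rw [hasSum_iff_tendsto_nat_of_summable_norm hs, ← tendsto_add_atTop_iff_nat 1]
  simpa only [sum_range_succ_telescope] using hT

lemma IsDRep.exists_comp_lipschitzWith {f : K → ℂ} {φ : ℕ → K → ℂ} (hφ : IsDRep f φ)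
    {F : ℂ → ℂ} {L : ℝ≥0} (hF : LipschitzWith L F) :
    ∃ ψ, IsDRep (fun k => F (f k)) ψ ∧ DBound ψ ≤ ‖F 0‖ₑ + L * DBound φ := by
  set S : K → ℕ → ℂ := fun k n => ∑ j ∈ Finset.range n, φ j k
  have hS : ∀ k n, S k (n + 1) - S k n = φ n k := fun k n => by
    simp [S, Finset.sum_range_succ]
  set T : K → ℕ → ℂ := fun k n => F (S k n)
  have hstep : ∀ k n, ‖T k (n + 1) - T k n‖ ≤ L * ‖φ n k‖ := fun k n => by
    have := hF.dist_le_mul (S k (n + 1)) (S k n)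
    rwa [dist_eq_norm, dist_eq_norm, hS] at this
  have hestep : ∀ k n, ‖T k (n + 1) - T k n‖ₑ ≤ L * ‖φ n k‖ₑ := fun k n => by
    have := hF.edist_le_mul (S k (n + 1)) (S k n)
    rwa [edist_eq_enorm_sub, edist_eq_enorm_sub, hS] at this
  refine ⟨fun n k => telescope (T k) n, ⟨fun n => ?_, fun k => ?_⟩, ?_⟩
  · have hT : ∀ m, Continuous fun k => T k m := fun m =>
      hF.continuous.comp (continuous_finsetSum _ fun j _ => hφ.1 j)
    cases n with
    | zero => exact hT 0
    | succ n => exact (hT _).sub (hT _)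
  · refine hasSum_telescope ((hF.continuous.tendsto _).comp (hφ.2 k).tendsto_sum_nat) ?_
    exact (summable_nat_add_iff 1).mp (.of_nonneg_of_le (fun _ => norm_nonneg _) (hstep k)
      ((hφ.summable_norm k).mul_left (L : ℝ)))
  · rw [DBound_eq_iSup_tsum_enorm, DBound_eq_iSup_tsum_enorm]
    refine iSup_le fun k => ?_
    rw [tsum_eq_zero_add' ENNReal.summable]
    gcongr
    · simp [telescope, T, S]
    · calc ∑' n, ‖T k (n + 1) - T k n‖ₑ ≤ ∑' n, L * ‖φ n k‖ₑ := ENNReal.tsum_le_tsum (hestep k)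
        _ ≤ L * ⨆ k, ∑' j, ‖φ j k‖ₑ := by
            rw [ENNReal.tsum_mul_left]
            gcongr
            exact le_iSup (fun k => ∑' j, ‖φ j k‖ₑ) k

lemma MemD.comp_lipschitzWith {f : K → ℂ} (hf : MemD f) {F : ℂ → ℂ} {L : ℝ≥0}
    (hF : LipschitzWith L F) : MemD fun k => F (f k) := by
  obtain ⟨φ, hφ, hfin⟩ := hf
  obtain ⟨ψ, hψ, hle⟩ := hφ.exists_comp_lipschitzWith hF
  exact ⟨ψ, hψ, hle.trans_lt
    (ENNReal.add_lt_top.mpr ⟨enorm_lt_top, ENNReal.mul_lt_top coe_lt_top hfin⟩)⟩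

lemma IsDRep.exists_mul {f g : K → ℂ} {φ ψ : ℕ → K → ℂ} (hφ : IsDRep f φ) (hψ : IsDRep g ψ) :
    ∃ χ, IsDRep (fun k => f k * g k) χ ∧ DBound χ ≤ DBound φ * DBound ψ := by
  have e : ℕ ≃ ℕ × ℕ := Nat.pairEquiv.symm
  refine ⟨fun n k => φ (e n).1 k * ψ (e n).2 k,
    ⟨fun n => (hφ.1 _).mul (hψ.1 _), fun k => ?_⟩, ?_⟩
  · have hs : Summable fun p : ℕ × ℕ => φ p.1 k * ψ p.2 k :=
      (Summable.mul_norm (f := fun i => φ i k) (g := fun j => ψ j k)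
        (hφ.summable_norm k) (hψ.summable_norm k)).of_norm
    exact e.hasSum_iff.mpr ((hφ.2 k).mul (hψ.2 k) hs)
  · rw [DBound_eq_iSup_tsum_enorm, DBound_eq_iSup_tsum_enorm, DBound_eq_iSup_tsum_enorm]
    refine iSup_le fun k => ?_
    calc ∑' n, ‖φ (e n).1 k * ψ (e n).2 k‖ₑ
        = ∑' p : ℕ × ℕ, ‖φ p.1 k‖ₑ * ‖ψ p.2 k‖ₑ := by
          simp only [enorm_mul]
          exact e.tsum_eq fun p => ‖φ p.1 k‖ₑ * ‖ψ p.2 k‖ₑ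
      _ = (∑' i, ‖φ i k‖ₑ) * ∑' j, ‖ψ j k‖ₑ := by
          rw [ENNReal.tsum_prod']
          simp only [ENNReal.tsum_mul_left, ENNReal.tsum_mul_right]
      _ ≤ (⨆ k, ∑' i, ‖φ i k‖ₑ) * ⨆ k, ∑' j, ‖ψ j k‖ₑ :=
          mul_le_mul' (le_iSup (fun k => ∑' i, ‖φ i k‖ₑ) k)
            (le_iSup (fun k => ∑' j, ‖ψ j k‖ₑ) k)

lemma MemD.mul {f g : K → ℂ} (hf : MemD f) (hg : MemD g) : MemD fun k => f k * g k := by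
  obtain ⟨φ, hφ, hφfin⟩ := hf
  obtain ⟨ψ, hψ, hψfin⟩ := hg
  obtain ⟨χ, hχ, hle⟩ := hφ.exists_mul hψ
  exact ⟨χ, hχ, hle.trans_lt (ENNReal.mul_lt_top hφfin hψfin)⟩

end

lemma lipschitzWith_inv_max {δ : ℝ≥0} (hδ : 0 < δ) :
    LipschitzWith (δ ^ 2)⁻¹ fun t : ℝ => (max t δ)⁻¹ := by
  refine LipschitzWith.of_dist_le_mul fun x y => ?_
  have hδ' : (0 : ℝ) < δ := hδ
  have hx : (δ : ℝ) ≤ max x δ := le_max_right _ _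
  have hy : (δ : ℝ) ≤ max y δ := le_max_right _ _
  have hxy : (0 : ℝ) < max x δ * max y δ := by positivity
  rw [Real.dist_eq, Real.dist_eq, inv_sub_inv (hδ'.trans_le hx).ne' (hδ'.trans_le hy).ne', abs_div,
    abs_of_pos hxy, abs_sub_comm]
  calc |max x δ - max y δ| / (max x δ * max y δ) ≤ |max x δ - max y δ| / δ ^ 2 :=
        div_le_div_of_nonneg_left (abs_nonneg _) (by positivity) (by nlinarith)
    _ ≤ |x - y| / δ ^ 2 :=
        div_le_div_of_nonneg_right (abs_max_sub_max_le_abs x y (δ : ℝ)) (by positivity)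
    _ = ((δ ^ 2)⁻¹ : ℝ≥0) * |x - y| := by push_cast; ring

lemma lipschitzWith_inv_max_norm {δ : ℝ≥0} (hδ : 0 < δ) :
    LipschitzWith (δ ^ 2)⁻¹ fun z : ℂ => (((max ‖z‖ δ)⁻¹ : ℝ) : ℂ) := by
  have := Complex.isometry_ofReal.lipschitz.comp
    ((lipschitzWith_inv_max hδ).comp (lipschitzWith_one_norm (E := ℂ)))
  rwa [mul_one, one_mul] at this

theorem stmt0_general {K : Type u} [MetricSpace K] (f : K → ℂ) (hf : MemD f) :
    (MemD (fun k => (‖f k‖ : ℂ)) ∧ DNorm (fun k => (‖f k‖ : ℂ)) ≤ DNorm f) ∧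
    ((∃ δ : ℝ, 0 < δ ∧ ∀ k, δ ≤ ‖f k‖) → MemD (fun k => (f k)⁻¹)) := by
  have hnorm : LipschitzWith 1 fun z : ℂ => (‖z‖ : ℂ) := by
    have := Complex.isometry_ofReal.lipschitz.comp (lipschitzWith_one_norm (E := ℂ))
    rwa [mul_one] at this
  refine ⟨⟨hf.comp_lipschitzWith hnorm, le_iInf₂ fun φ hφ => ?_⟩, ?_⟩
  · obtain ⟨ψ, hψ, hle⟩ := hφ.exists_comp_lipschitzWith hnorm
    exact (iInf₂_le ψ hψ).trans (by simpa using hle)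
  · rintro ⟨δ, hδ, hδf⟩
    lift δ to ℝ≥0 using hδ.le
    have hinv := hf.comp_lipschitzWith (lipschitzWith_inv_max_norm hδ)
    have := ((hf.comp_lipschitzWith Complex.isometry_conj.lipschitz).mul hinv).mul hinv
    convert this using 2 with k
    rw [max_eq_left (hδf k), Complex.inv_def, Complex.normSq_eq_norm_sq]
    push_cast
    ring

/-- if `f ∈ D(K)` is bounded then `|f| ∈ D(K)` with `‖|f|‖_D ≤ ‖f‖_D`,
and if `inf_k |f(k)| > 0` then `1/f ∈ D(K)`. -/
theorem stmt0 {K : Type u} [MetricSpace K] (f : K → ℂ)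
    (hb : ∃ C : ℝ, ∀ k, ‖f k‖ ≤ C) (hf : MemD f) :
    (MemD (fun k => (‖f k‖ : ℂ)) ∧ DNorm (fun k => (‖f k‖ : ℂ)) ≤ DNorm f) ∧
    ((∃ δ : ℝ, 0 < δ ∧ ∀ k, δ ≤ ‖f k‖) → MemD (fun k => (f k)⁻¹)) :=
  stmt0_general f hf
end

section
/- Let K be a metric space, W a nonempty subset of K (with the subspace metric), and g : W → ℝ a bounded real-valued function with g ∈ D(W). Then there exists a real-valued function g̃ : K → ℝ in D(K) with g̃|_W = g and ‖g̃‖_{D(K)} = ‖g‖_{D(W)}. -/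
open Filter Set Topology ENNReal

/-!
For real `g`, a representation `g = Σ φ_j` splits as `g = p - q` with `p = Σ (Re φ_j)⁺` and
`q = Σ (Re φ_j)⁻`, both nonnegative and lower semicontinuous, with `p + q ≤ Σ |φ_j|`. Conversely,
approximating such `p` and `q` from below by increasing continuous functions (inf-convolutions)
and telescoping gives a representation of `p - q` with bound `sup (p + q)`. So `‖g‖_D` is the least
`c` admitting such a splitting with `p + q ≤ c`; a supremum over representations with bounds
`‖g‖_D + 1/(m+1)` shows the least value is attained. A splitting on `W` extends to `K` with the same
`c`, by spreading the infima of `p` and `q` over small balls; restriction to `W` does not increase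
the `D`-norm.
-/

open Metric

section Semicontinuity

variable {X : Type*} [TopologicalSpace X]

lemma lowerSemicontinuous_tsum_of_nonneg {f : ℕ → X → ℝ} (hf : ∀ n, LowerSemicontinuous (f n))
    (h0 : ∀ n x, 0 ≤ f n x) (hs : ∀ x, Summable (f · x)) :
    LowerSemicontinuous fun x => ∑' n, f n x := by
  have hmono (x : X) : Monotone fun N => ∑ n ∈ Finset.range N, f n x :=
    fun _ _ h => Finset.sum_le_sum_of_subset_of_nonneg (Finset.range_mono h) fun n _ _ => h0 n x
  have hbdd (x : X) : BddAbove (range fun N => ∑ n ∈ Finset.range N, f n x) :=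
    ⟨∑' n, f n x, forall_mem_range.2 fun N => (hs x).sum_le_tsum _ fun n _ => h0 n x⟩
  have heq : (fun x => ∑' n, f n x) = fun x => ⨆ N, ∑ n ∈ Finset.range N, f n x := funext fun x =>
    tendsto_nhds_unique (hs x).hasSum.tendsto_sum_nat (tendsto_atTop_ciSup (hmono x) (hbdd x))
  rw [heq]
  exact lowerSemicontinuous_ciSup hbdd fun N => lowerSemicontinuous_sum fun n _ => hf n

lemma LowerSemicontinuous.ennreal_toReal {f : X → ℝ≥0∞} (hf : LowerSemicontinuous f)
    (h : ∀ x, f x ≠ ⊤) : LowerSemicontinuous fun x => (f x).toReal := by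
  intro x t ht
  rcases lt_or_ge t 0 with h0 | h0
  · exact Eventually.of_forall fun y => h0.trans_le toReal_nonneg
  · filter_upwards [hf x (ENNReal.ofReal t) ((ofReal_lt_iff_lt_toReal h0 (h x)).2 ht)] with y hy
    exact (ofReal_lt_iff_lt_toReal h0 (h y)).1 hy

lemma LowerSemicontinuous.ennreal_ofReal {f : X → ℝ} (hf : LowerSemicontinuous f) :
    LowerSemicontinuous fun x => ENNReal.ofReal (f x) :=
  ENNReal.continuous_ofReal.comp_lowerSemicontinuous hf ENNReal.ofReal_mono

end Semicontinuity

section LipschitzApprox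

variable {X : Type*} [PseudoEMetricSpace X]

/-- Truncating `h` at `n` makes the sequence start at `0`. -/
noncomputable def lipschitzApprox (h : X → ℝ≥0∞) (n : ℕ) (x : X) : ℝ≥0∞ :=
  ⨅ y, (min (h y) n + n * edist x y)

variable (h : X → ℝ≥0∞)

lemma lipschitzApprox_zero : lipschitzApprox h 0 = 0 := by
  ext x
  exact le_antisymm ((iInf_le _ x).trans (by simp)) bot_le

lemma monotone_lipschitzApprox : Monotone (lipschitzApprox h) := by
  intro n m hnm x
  unfold lipschitzApprox
  gcongr

lemma lipschitzApprox_le (n : ℕ) : lipschitzApprox h n ≤ h := fun x =>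
  (iInf_le _ x).trans (by simp)

lemma continuous_lipschitzApprox (n : ℕ) : Continuous (lipschitzApprox h n) := by
  refine continuous_of_le_add_edist n (natCast_ne_top n) fun x z => ?_
  rw [lipschitzApprox, lipschitzApprox, ENNReal.iInf_add]
  refine iInf_mono fun y => ?_
  grw [add_assoc, ← mul_add, add_comm (edist z y), ← edist_triangle]

variable {h}

lemma le_lipschitzApprox {x : X} {t r : ℝ≥0∞} {n : ℕ} (htn : t ≤ n) (htr : t ≤ n * r)
    (hball : ∀ y, edist y x < r → t < h y) : t ≤ lipschitzApprox h n x := by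
  refine le_iInf fun y => ?_
  rcases lt_or_ge (edist y x) r with hy | hy
  · exact le_add_right (le_min (hball y hy).le htn)
  · rw [edist_comm] at hy
    exact le_add_left (htr.trans (by gcongr))

lemma LowerSemicontinuous.iSup_lipschitzApprox (hh : LowerSemicontinuous h) :
    ⨆ n, lipschitzApprox h n = h := by
  refine le_antisymm (iSup_le (lipschitzApprox_le h)) fun x => ?_
  refine le_of_forall_lt_imp_le_of_dense fun t ht => ?_
  obtain ⟨r, hr, hball⟩ := Metric.nhds_basis_eball.eventually_iff.1 (hh x t ht)
  have htop : max t (t / r) ≠ ⊤ := max_ne_top ht.ne_top (div_lt_top ht.ne_top hr.ne').ne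
  obtain ⟨n, hn⟩ := ENNReal.exists_nat_gt htop
  rw [max_lt_iff] at hn
  have htr : t ≤ n * r :=
    (ENNReal.div_le_iff_le_mul (.inl hr.ne') (.inr (pos_of_gt hn.1).ne')).1 hn.2.le
  exact (le_lipschitzApprox hn.1.le htr fun y hy => hball hy).trans
    (le_iSup (lipschitzApprox h) n x)

lemma LowerSemicontinuous.exists_monotone_continuous_tendsto {p : X → ℝ}
    (hp : LowerSemicontinuous p) (h0 : 0 ≤ p) :
    ∃ a : ℕ → X → ℝ, a 0 = 0 ∧ (∀ x, Monotone (a · x)) ∧ (∀ n, Continuous (a n)) ∧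
      (∀ n, a n ≤ p) ∧ ∀ x, Tendsto (a · x) atTop (𝓝 (p x)) := by
  set P : X → ℝ≥0∞ := fun x => ENNReal.ofReal (p x)
  have hfin (n : ℕ) (x : X) : lipschitzApprox P n x ≠ ⊤ :=
    ne_top_of_le_ne_top ofReal_ne_top (lipschitzApprox_le P n x)
  refine ⟨fun n x => (lipschitzApprox P n x).toReal, ?_, fun x n m hnm => ?_, fun n => ?_,
    fun n x => ?_, fun x => ?_⟩
  · ext x
    simp [lipschitzApprox_zero]
  · exact toReal_mono (hfin m x) (monotone_lipschitzApprox P hnm x)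
  · exact ENNReal.continuousOn_toReal.comp_continuous (continuous_lipschitzApprox P n) (hfin n)
  · exact toReal_le_of_le_ofReal (h0 x) (lipschitzApprox_le P n x)
  · have hlim := tendsto_atTop_iSup fun n m hnm => monotone_lipschitzApprox P hnm x
    rw [← iSup_apply, hp.ennreal_ofReal.iSup_lipschitzApprox] at hlim
    simpa [P, Function.comp_def, toReal_ofReal (h0 x)] using
      (ENNReal.tendsto_toReal ofReal_ne_top).comp hlim

end LipschitzApprox

section LscExtend

variable {X : Type*} [PseudoMetricSpace X] {W : Set X}

/-- Each ball `B(w, r)` carries the infimum of `F` over `B(w, 2r) ∩ W`: if two such balls meet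
and `r' ≤ r`, the centre `w'` lies in `B(w, 2r)`, which is what makes `lscExtend_add_le` work. -/
noncomputable def lscExtend (W : Set X) (F : W → ℝ≥0∞) (x : X) : ℝ≥0∞ :=
  ⨆ (w : W) (r : ℝ), (ball (w : X) r).indicator (fun _ => ⨅ (v : W) (_ : dist v w < 2 * r), F v) x

lemma lowerSemicontinuous_lscExtend (F : W → ℝ≥0∞) : LowerSemicontinuous (lscExtend W F) :=
  lowerSemicontinuous_iSup fun _ => lowerSemicontinuous_iSup fun _ =>
    isOpen_ball.lowerSemicontinuous_indicator bot_le

lemma lscExtend_coe {F : W → ℝ≥0∞} (hF : LowerSemicontinuous F) (w : W) :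
    lscExtend W F w = F w := by
  refine le_antisymm (iSup₂_le fun v r => ?_) (le_of_forall_lt_imp_le_of_dense fun t ht => ?_)
  · by_cases hw : (w : X) ∈ ball (v : X) r
    · rw [indicator_of_mem hw]
      exact iInf₂_le w (by
        rw [Subtype.dist_eq]; linarith [mem_ball.1 hw, dist_nonneg (x := (w : X)) (y := v)])
    · simp [indicator_of_notMem hw]
  · obtain ⟨ε, hε, hball⟩ := Metric.eventually_nhds_iff.1 (hF w t ht)
    refine le_trans ?_ (le_iSup₂ (f := fun (v : W) (r : ℝ) => (ball (v : X) r).indicator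
      (fun _ => ⨅ (u : W) (_ : dist u v < 2 * r), F u) (w : X)) w (ε / 2))
    rw [indicator_of_mem (mem_ball_self (half_pos hε))]
    exact le_iInf₂ fun u hu => (hball (by rwa [mul_div_cancel₀ _ two_ne_zero] at hu)).le

lemma iInf_add_iInf_le_of_mem_ball {F G : W → ℝ≥0∞} {c : ℝ≥0∞} (hFG : ∀ w, F w + G w ≤ c)
    {x : X} {w w' : W} {r r' : ℝ} (hx : x ∈ ball (w : X) r) (hx' : x ∈ ball (w' : X) r') :
    (⨅ (v : W) (_ : dist v w < 2 * r), F v) + (⨅ (v : W) (_ : dist v w' < 2 * r'), G v) ≤ c := by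
  rw [mem_ball] at hx hx'
  have hww' : dist w w' < r + r' := by
    rw [Subtype.dist_eq]; linarith [dist_triangle_left (w : X) w' x]
  rcases le_total r' r with hr | hr
  · refine (add_le_add (iInf₂_le w' ?_) (iInf₂_le w' ?_)).trans (hFG w')
    · rw [dist_comm]; linarith
    · rw [dist_self]; linarith [dist_nonneg (x := x) (y := w')]
  · refine (add_le_add (iInf₂_le w ?_) (iInf₂_le w ?_)).trans (hFG w)
    · rw [dist_self]; linarith [dist_nonneg (x := x) (y := w)]
    · linarith

lemma lscExtend_add_le {F G : W → ℝ≥0∞} {c : ℝ≥0∞} (hFG : ∀ w, F w + G w ≤ c) (x : X) :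
    lscExtend W F x + lscExtend W G x ≤ c := by
  cases isEmpty_or_nonempty W
  · simp [lscExtend]
  refine iSup_add_iSup_le fun w w' => iSup_add_iSup_le fun r r' => ?_
  by_cases hx : x ∈ ball (w : X) r <;> by_cases hx' : x ∈ ball (w' : X) r'
  · simpa [indicator_of_mem hx, indicator_of_mem hx'] using iInf_add_iInf_le_of_mem_ball hFG hx hx'
  · simpa [indicator_of_mem hx, indicator_of_notMem hx'] using
      le_self_add.trans (iInf_add_iInf_le_of_mem_ball hFG hx hx)
  · simpa [indicator_of_notMem hx, indicator_of_mem hx'] using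
      le_add_self.trans (iInf_add_iInf_le_of_mem_ball hFG hx' hx')
  · simp [indicator_of_notMem hx, indicator_of_notMem hx']

end LscExtend

section Decomposition

variable {X : Type*} [TopologicalSpace X]

structure IsLSCDecomposition (g p q : X → ℝ) (c : ℝ) : Prop where
  lsc_left : LowerSemicontinuous p
  lsc_right : LowerSemicontinuous q
  nonneg_left : 0 ≤ p
  nonneg_right : 0 ≤ q
  sub_eq : ∀ x, p x - q x = g x
  add_le : ∀ x, p x + q x ≤ c

lemma IsLSCDecomposition.mono {g p q : X → ℝ} {c c' : ℝ} (h : IsLSCDecomposition g p q c)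
    (hc : c ≤ c') : IsLSCDecomposition g p q c' :=
  { h with add_le := fun x => (h.add_le x).trans hc }

lemma exists_isLSCDecomposition_of_forall_pos {g : X → ℝ} {c : ℝ}
    (h : ∀ ε > 0, ∃ p q, IsLSCDecomposition g p q (c + ε)) :
    ∃ p q, IsLSCDecomposition g p q c := by
  -- All `p m - q m` equal `g`, so the suprema of `p m - δ m` and `q m - δ m` still differ by `g`.
  set δ : ℕ → ℝ := fun m => 1 / ((m : ℝ) + 1)
  have hδ (m : ℕ) : 0 < δ m := Nat.one_div_pos_of_nat
  choose p q hpq using fun m => h (δ m) (hδ m)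
  have hbdd {r : ℕ → X → ℝ} (hr : ∀ m x, r m x ≤ p m x + q m x) (x : X) :
      BddAbove (range fun m => r m x - δ m) :=
    ⟨c, forall_mem_range.2 fun m => by linarith [hr m x, (hpq m).add_le x]⟩
  have hp_bdd := hbdd (r := p) fun m x => le_add_of_nonneg_right ((hpq m).nonneg_right x)
  have hq_bdd := hbdd (r := q) fun m x => le_add_of_nonneg_left ((hpq m).nonneg_left x)
  have hnonneg {r : ℕ → X → ℝ} (hr : ∀ m, 0 ≤ r m)
      (hb : ∀ x, BddAbove (range fun m => r m x - δ m)) (x : X) : 0 ≤ ⨆ m, (r m x - δ m) := by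
    have hlim : Tendsto (fun m => -δ m) atTop (𝓝 0) := by
      simpa [δ] using (tendsto_one_div_add_atTop_nhds_zero_nat (𝕜 := ℝ)).neg
    refine le_of_tendsto' hlim fun m => ?_
    exact (neg_le_sub_iff_le_add.2 (le_add_of_nonneg_left (hr m x))).trans (le_ciSup (hb x) m)
  refine ⟨fun x => ⨆ m, (p m x - δ m), fun x => ⨆ m, (q m x - δ m),
    lowerSemicontinuous_ciSup hp_bdd fun m =>
      (hpq m).lsc_left.add continuous_const.lowerSemicontinuous,
    lowerSemicontinuous_ciSup hq_bdd fun m =>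
      (hpq m).lsc_right.add continuous_const.lowerSemicontinuous,
    hnonneg (fun m => (hpq m).nonneg_left) hp_bdd, hnonneg (fun m => (hpq m).nonneg_right) hq_bdd,
    fun x => ?_, fun x => ?_⟩
  · have hq (m : ℕ) : q m x - δ m = p m x - δ m - g x := by linarith [(hpq m).sub_eq x]
    simp only [hq, ← ciSup_sub (hp_bdd x)]
    ring
  · rw [← le_sub_iff_add_le]
    refine ciSup_le fun m => le_sub_comm.1 (ciSup_le fun m' => ?_)
    -- `p m + q m'` is the mean of `p m + q m` and `p m' + q m'`.
    linarith [(hpq m).sub_eq x, (hpq m').sub_eq x, (hpq m).add_le x, (hpq m').add_le x, hδ m, hδ m']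

lemma IsLSCDecomposition.extend {X : Type*} [PseudoMetricSpace X] {W : Set X} {g p q : W → ℝ}
    {c : ℝ} (h : IsLSCDecomposition g p q c) (hc : 0 ≤ c) :
    ∃ G P Q : X → ℝ, IsLSCDecomposition G P Q c ∧ ∀ w : W, G w = g w := by
  set F₁ := lscExtend W fun w => ENNReal.ofReal (p w)
  set F₂ := lscExtend W fun w => ENNReal.ofReal (q w)
  have hadd (x : X) : F₁ x + F₂ x ≤ ENNReal.ofReal c := lscExtend_add_le (fun w => by
    rw [← ofReal_add (h.nonneg_left w) (h.nonneg_right w)]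
    exact ofReal_le_ofReal (h.add_le w)) x
  have hF₁ (x : X) : F₁ x ≠ ⊤ := ne_top_of_le_ne_top ofReal_ne_top (le_self_add.trans (hadd x))
  have hF₂ (x : X) : F₂ x ≠ ⊤ := ne_top_of_le_ne_top ofReal_ne_top (le_add_self.trans (hadd x))
  refine ⟨fun x => (F₁ x).toReal - (F₂ x).toReal, fun x => (F₁ x).toReal, fun x => (F₂ x).toReal,
    ⟨(lowerSemicontinuous_lscExtend _).ennreal_toReal hF₁,
      (lowerSemicontinuous_lscExtend _).ennreal_toReal hF₂,
      fun x => toReal_nonneg, fun x => toReal_nonneg, fun x => rfl, fun x => ?_⟩, fun w => ?_⟩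
  · rw [← toReal_add (hF₁ x) (hF₂ x)]
    exact toReal_le_of_le_ofReal hc (hadd x)
  · simp only [F₁, F₂, lscExtend_coe h.lsc_left.ennreal_ofReal,
      lscExtend_coe h.lsc_right.ennreal_ofReal]
    rw [toReal_ofReal (h.nonneg_left w), toReal_ofReal (h.nonneg_right w), h.sub_eq]

end Decomposition

section DSpace

variable {X : Type*} [MetricSpace X]

lemma dNorm_le_dBound {f : X → ℂ} {φ : ℕ → X → ℂ} (h : IsDRep f φ) : DNorm f ≤ DBound φ :=
  iInf₂_le φ h

lemma MemD.dNorm_ne_top {f : X → ℂ} (hf : MemD f) : DNorm f ≠ ⊤ := by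
  obtain ⟨φ, hφ, hfin⟩ := hf
  exact ((dNorm_le_dBound hφ).trans_lt hfin).ne

lemma dNorm_restrict_le (f : X → ℂ) (W : Set X) : DNorm (fun w : W => f w) ≤ DNorm f :=
  le_iInf₂ fun φ hφ => (dNorm_le_dBound (f := fun w : W => f w) (φ := fun j w => φ j w)
    ⟨fun j => (hφ.1 j).comp continuous_subtype_val, fun w => hφ.2 w⟩).trans
    (iSup_le fun w => le_iSup (fun x => ∑' j, (‖φ j x‖₊ : ℝ≥0∞)) (w : X))

lemma tsum_nnnorm_le_dBound (φ : ℕ → X → ℂ) (x : X) : ∑' j, (‖φ j x‖₊ : ℝ≥0∞) ≤ DBound φ :=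
  le_iSup (fun x => ∑' j, (‖φ j x‖₊ : ℝ≥0∞)) x

lemma summable_norm_of_dBound_ne_top {φ : ℕ → X → ℂ} (h : DBound φ ≠ ⊤) (x : X) :
    Summable fun j => ‖φ j x‖ := by
  simpa using ENNReal.summable_toReal ((tsum_nnnorm_le_dBound φ x).trans_lt h.lt_top).ne

lemma tsum_norm_le_dBound {φ : ℕ → X → ℂ} (h : DBound φ ≠ ⊤) (x : X) :
    ∑' j, ‖φ j x‖ ≤ (DBound φ).toReal := by
  have := ENNReal.toReal_mono h (tsum_nnnorm_le_dBound φ x)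
  rwa [ENNReal.tsum_toReal_eq fun j => coe_ne_top] at this

lemma IsDRep.isLSCDecomposition {g : X → ℝ} {φ : ℕ → X → ℂ}
    (hφ : IsDRep (fun x => (g x : ℂ)) φ) (hb : DBound φ ≠ ⊤) :
    IsLSCDecomposition g (fun x => ∑' j, (φ j x).re⁺) (fun x => ∑' j, (φ j x).re⁻)
      (DBound φ).toReal := by
  have hre (j : ℕ) : Continuous fun x => (φ j x).re := Complex.continuous_re.comp (hφ.1 j)
  have hsum_abs (x : X) : Summable fun j => |(φ j x).re| :=
    (summable_norm_of_dBound_ne_top hb x).of_nonneg_of_le (fun j => abs_nonneg _)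
      fun j => Complex.abs_re_le_norm _
  have hpos (x : X) : Summable fun j => (φ j x).re⁺ :=
    (hsum_abs x).of_nonneg_of_le (fun j => posPart_nonneg _)
      fun j => sup_le (le_abs_self _) (abs_nonneg _)
  have hneg (x : X) : Summable fun j => (φ j x).re⁻ :=
    (hsum_abs x).of_nonneg_of_le (fun j => negPart_nonneg _)
      fun j => sup_le (neg_le_abs _) (abs_nonneg _)
  refine ⟨lowerSemicontinuous_tsum_of_nonneg
      (fun j => (continuous_posPart.comp (hre j)).lowerSemicontinuous)
      (fun j x => posPart_nonneg _) hpos,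
    lowerSemicontinuous_tsum_of_nonneg
      (fun j => (continuous_negPart.comp (hre j)).lowerSemicontinuous)
      (fun j x => negPart_nonneg _) hneg,
    fun x => tsum_nonneg fun j => posPart_nonneg _, fun x => tsum_nonneg fun j => negPart_nonneg _,
    fun x => ?_, fun x => ?_⟩
  · rw [← (hpos x).tsum_sub (hneg x)]
    simpa only [posPart_sub_negPart, Complex.ofReal_re] using (Complex.hasSum_re (hφ.2 x)).tsum_eq
  · rw [← (hpos x).tsum_add (hneg x)]
    simp only [posPart_add_negPart]
    exact ((hsum_abs x).tsum_le_tsum (fun j => Complex.abs_re_le_norm _)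
      (summable_norm_of_dBound_ne_top hb x)).trans (tsum_norm_le_dBound hb x)

lemma exists_isLSCDecomposition_of_memD {g : X → ℝ} (hg : MemD fun x => (g x : ℂ)) :
    ∃ p q, IsLSCDecomposition g p q (DNorm fun x => (g x : ℂ)).toReal := by
  have hD := hg.dNorm_ne_top
  refine exists_isLSCDecomposition_of_forall_pos fun ε hε => ?_
  obtain ⟨φ, hφ, hlt⟩ : ∃ φ, IsDRep (fun x => (g x : ℂ)) φ ∧
      DBound φ < (DNorm fun x => (g x : ℂ)) + ENNReal.ofReal ε := by
    simpa [DNorm, iInf_lt_iff] using ENNReal.lt_add_right hD (ofReal_pos.2 hε).ne'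
  have hb : DBound φ ≠ ⊤ := (hlt.trans (add_lt_top.2 ⟨hD.lt_top, ofReal_lt_top⟩)).ne
  refine ⟨_, _, (hφ.isLSCDecomposition hb).mono ?_⟩
  have := toReal_mono (add_ne_top.2 ⟨hD, ofReal_ne_top⟩) hlt.le
  rwa [toReal_add hD ofReal_ne_top, toReal_ofReal hε.le] at this

lemma exists_isDRep_of_monotone {f : X → ℝ} {a b : ℕ → X → ℝ} {c : ℝ} (ha0 : a 0 = 0)
    (hb0 : b 0 = 0) (ha : ∀ x, Monotone (a · x)) (hb : ∀ x, Monotone (b · x))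
    (hac : ∀ n, Continuous (a n)) (hbc : ∀ n, Continuous (b n))
    (hlim : ∀ x, Tendsto (fun n => a n x - b n x) atTop (𝓝 (f x)))
    (hle : ∀ n x, a n x + b n x ≤ c) :
    ∃ φ, IsDRep (fun x => (f x : ℂ)) φ ∧ DBound φ ≤ ENNReal.ofReal c := by
  set s : ℕ → X → ℝ := fun n x => a n x - b n x
  set d : ℕ → X → ℝ := fun n x => s (n + 1) x - s n x
  have hpartial (x : X) (N : ℕ) : ∑ n ∈ Finset.range N, d n x = s N x := by
    simp [d, Finset.sum_range_sub (s · x), s, ha0, hb0]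
  have hd_le (x : X) (N : ℕ) : ∑ n ∈ Finset.range N, |d n x| ≤ c := by
    calc ∑ n ∈ Finset.range N, |d n x|
        ≤ ∑ n ∈ Finset.range N, ((a (n + 1) x - a n x) + (b (n + 1) x - b n x)) := by
          refine Finset.sum_le_sum fun n _ => abs_sub_le_iff.2 ⟨?_, ?_⟩ <;>
            linarith [ha x n.le_succ, hb x n.le_succ]
      _ = a N x + b N x := by
          rw [Finset.sum_add_distrib, Finset.sum_range_sub (a · x), Finset.sum_range_sub (b · x)]
          simp [ha0, hb0]
      _ ≤ c := hle N x
  have hd_summable (x : X) : Summable fun n => |d n x| :=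
    summable_of_sum_range_le (fun n => abs_nonneg _) (hd_le x)
  refine ⟨fun n x => (d n x : ℂ), ⟨fun n => by fun_prop, fun x => ?_⟩, iSup_le fun x => ?_⟩
  · refine Complex.hasSum_ofReal.2 (((hd_summable x).of_abs.hasSum_iff_tendsto_nat).2 ?_)
    simpa only [hpartial] using hlim x
  · refine ENNReal.tsum_le_of_sum_range_le fun N => ?_
    refine le_of_eq_of_le ?_ (ofReal_le_ofReal (hd_le x N))
    rw [ofReal_sum_of_nonneg fun n _ => abs_nonneg _]
    refine Finset.sum_congr rfl fun n _ => ?_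
    rw [← Real.norm_eq_abs, ofReal_norm, Complex.nnnorm_real]
    rfl

lemma IsLSCDecomposition.exists_isDRep {g p q : X → ℝ} {c : ℝ}
    (h : IsLSCDecomposition g p q c) :
    ∃ φ, IsDRep (fun x => (g x : ℂ)) φ ∧ DBound φ ≤ ENNReal.ofReal c := by
  obtain ⟨a, ha0, ha, hac, hap, halim⟩ :=
    h.lsc_left.exists_monotone_continuous_tendsto h.nonneg_left
  obtain ⟨b, hb0, hb, hbc, hbq, hblim⟩ :=
    h.lsc_right.exists_monotone_continuous_tendsto h.nonneg_right
  refine exists_isDRep_of_monotone ha0 hb0 ha hb hac hbc (fun x => ?_)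
    fun n x => (add_le_add (hap n x) (hbq n x)).trans (h.add_le x)
  simpa only [h.sub_eq] using (halim x).sub (hblim x)

end DSpace

theorem stmt1_general {K : Type u} [MetricSpace K] (W : Set K)
    (g : W → ℝ)
    (hg : MemD (fun w : W => (g w : ℂ))) :
    ∃ gext : K → ℝ, MemD (fun k => (gext k : ℂ)) ∧
      (∀ w : W, gext w = g w) ∧
      DNorm (fun k => (gext k : ℂ)) = DNorm (fun w : W => (g w : ℂ)) := by
  obtain ⟨p, q, hpq⟩ := exists_isLSCDecomposition_of_memD hg
  obtain ⟨G, P, Q, hPQ, hG⟩ := hpq.extend toReal_nonneg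
  obtain ⟨φ, hφ, hφb⟩ := hPQ.exists_isDRep
  rw [ofReal_toReal hg.dNorm_ne_top] at hφb
  refine ⟨G, ⟨φ, hφ, hφb.trans_lt hg.dNorm_ne_top.lt_top⟩, hG,
    le_antisymm ((dNorm_le_dBound hφ).trans hφb) ?_⟩
  simpa only [hG] using dNorm_restrict_le (fun k => (G k : ℂ)) W

/-- every bounded real-valued `g ∈ D(W)`, `W ⊆ K` nonempty, extends to a
real-valued `g̃ ∈ D(K)` with `‖g̃‖_{D(K)} = ‖g‖_{D(W)}`. -/
theorem stmt1 {K : Type u} [MetricSpace K] (W : Set K) (hW : W.Nonempty)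
    (g : W → ℝ) (hb : ∃ C : ℝ, ∀ w, |g w| ≤ C)
    (hg : MemD (fun w : W => (g w : ℂ))) :
    ∃ gext : K → ℝ, MemD (fun k => (gext k : ℂ)) ∧
      (∀ w : W, gext w = g w) ∧
      DNorm (fun k => (gext k : ℂ)) = DNorm (fun w : W => (g w : ℂ)) :=
  stmt1_general W g hg
end

section
/- Let K be a metric space, W a closed subset of K, λ < ∞, and (φ_j)_{j=1}^∞ a sequence of continuous complex-valued functions on W with Σ_{j=1}^∞ |φ_j(w)| ≤ λ for all w ∈ W. Then there exists a sequence (φ̃_j)_{j=1}^∞ of continuous complex-valued functions on K with φ̃_j|_W = φ_j for all j and Σ_{j=1}^∞ |φ̃_j(k)| ≤ λ for all k ∈ K. -/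
open Filter Set Topology ENNReal

/-!
Extend every `φ j` to `K` by Tietze and then clamp the extensions greedily: the `j`-th function
is radially shrunk so that its norm does not exceed what is left of the budget `max λ 0` after
the norms of the earlier clamped functions are paid for. The partial sums of the norms then never
exceed the budget anywhere, and on `W` the budget is never exhausted early, so there the clamping
changes nothing.
-/

open Finset

section RadialClamp

variable {E : Type*} [NormedAddCommGroup E] [NormedSpace ℝ E]

/-- The radial retraction of `E` onto the closed ball of radius `max r 0` about `0`. -/
noncomputable def radialClamp (r : ℝ) (z : E) : E := (min (max r 0) ‖z‖ / ‖z‖) • z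

lemma radialClamp_of_norm_le {r : ℝ} {z : E} (h : ‖z‖ ≤ max r 0) : radialClamp r z = z := by
  rcases eq_or_ne z 0 with rfl | hz
  · simp [radialClamp]
  · rw [radialClamp, min_eq_right h, div_self (norm_ne_zero_iff.mpr hz), one_smul]

lemma norm_radialClamp (r : ℝ) (z : E) : ‖radialClamp r z‖ = min (max r 0) ‖z‖ := by
  rcases eq_or_ne z 0 with rfl | hz
  · simp [radialClamp]
  · have h0 : 0 ≤ min (max r 0) ‖z‖ := le_min (le_max_right r 0) (norm_nonneg z)
    rw [radialClamp, norm_smul, Real.norm_eq_abs, abs_div, abs_of_nonneg h0, abs_norm,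
      div_mul_cancel₀ _ (norm_ne_zero_iff.mpr hz)]

lemma continuous_radialClamp : Continuous fun p : ℝ × E => radialClamp p.1 p.2 := by
  rw [continuous_iff_continuousAt]
  rintro ⟨r, z⟩
  rcases eq_or_ne z 0 with rfl | hz
  · have hle : ∀ p : ℝ × E, ‖radialClamp p.1 p.2‖ ≤ ‖p.2‖ := fun p => by
      rw [norm_radialClamp]; exact min_le_right _ _
    have hz : Tendsto (fun p : ℝ × E => ‖p.2‖) (𝓝 (r, 0)) (𝓝 0) := by
      simpa using continuous_snd.norm.tendsto (r, (0 : E))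
    simpa [ContinuousAt, radialClamp] using squeeze_zero_norm hle hz
  · exact (ContinuousAt.div (by fun_prop) (by fun_prop) (by simpa using hz)).smul continuousAt_snd

end RadialClamp

section GreedyClamp

variable {X E : Type*} [NormedAddCommGroup E] [NormedSpace ℝ E] (R : ℝ) (g : ℕ → X → E)

noncomputable def greedyUsed : ℕ → X → ℝ
  | 0 => fun _ => 0
  | j + 1 => fun x => greedyUsed j x + ‖radialClamp (R - greedyUsed j x) (g j x)‖

noncomputable def greedyClamp (j : ℕ) (x : X) : E := radialClamp (R - greedyUsed R g j x) (g j x)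

lemma greedyUsed_succ (n : ℕ) (x : X) :
    greedyUsed R g (n + 1) x = greedyUsed R g n x + ‖greedyClamp R g n x‖ :=
  rfl

lemma greedyUsed_eq_sum (n : ℕ) (x : X) :
    greedyUsed R g n x = ∑ i ∈ range n, ‖greedyClamp R g i x‖ := by
  induction n with
  | zero => rfl
  | succ n ih => rw [greedyUsed_succ, ih, sum_range_succ]

variable {R g}

lemma greedyUsed_le (hR : 0 ≤ R) (n : ℕ) (x : X) : greedyUsed R g n x ≤ R := by
  induction n with
  | zero => exact hR
  | succ n ih =>
    calc greedyUsed R g (n + 1) x = greedyUsed R g n x + ‖greedyClamp R g n x‖ :=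
          greedyUsed_succ R g n x
      _ ≤ greedyUsed R g n x + max (R - greedyUsed R g n x) 0 := by
          gcongr
          rw [greedyClamp, norm_radialClamp]
          exact min_le_left _ _
      _ = max R (greedyUsed R g n x) := by rw [← max_add_add_left, add_sub_cancel, add_zero]
      _ ≤ R := max_le le_rfl ih

lemma continuous_greedyUsed [TopologicalSpace X] (hg : ∀ j, Continuous (g j)) (n : ℕ) :
    Continuous (greedyUsed R g n) := by
  induction n with
  | zero => exact continuous_const
  | succ n ih =>
    exact ih.add (continuous_radialClamp.comp ((continuous_const.sub ih).prodMk (hg n))).norm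

lemma continuous_greedyClamp [TopologicalSpace X] (hg : ∀ j, Continuous (g j)) (j : ℕ) :
    Continuous (greedyClamp R g j) :=
  continuous_radialClamp.comp ((continuous_const.sub (continuous_greedyUsed hg j)).prodMk (hg j))

lemma greedyClamp_eq_of_sum_range_le {x : X} (h : ∀ n, ∑ i ∈ range n, ‖g i x‖ ≤ R) (j : ℕ) :
    greedyClamp R g j x = g j x := by
  have hfits : ∀ n, greedyUsed R g n x = ∑ i ∈ range n, ‖g i x‖ →
      greedyClamp R g n x = g n x := by
    intro n hn
    apply radialClamp_of_norm_le
    have := h (n + 1)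
    rw [sum_range_succ, ← hn] at this
    exact le_max_of_le_left (by linarith)
  have hused : ∀ n, greedyUsed R g n x = ∑ i ∈ range n, ‖g i x‖ := by
    intro n
    induction n with
    | zero => rfl
    | succ n ih => rw [greedyUsed_succ, hfits n ih, ih, sum_range_succ]
  exact hfits j (hused j)

end GreedyClamp

lemma tsum_nnnorm_le_ofReal_iff {E : Type*} [NormedAddCommGroup E] {f : ℕ → E} {C : ℝ} :
    ∑' j, (‖f j‖₊ : ℝ≥0∞) ≤ ENNReal.ofReal C ↔ ∀ n, ∑ i ∈ range n, ‖f i‖ ≤ max C 0 := by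
  rw [ENNReal.tsum_eq_iSup_nat, iSup_le_iff]
  refine forall_congr' fun n => ?_
  rw [le_max_iff, ← ENNReal.ofReal_le_ofReal_iff',
    ENNReal.ofReal_sum_of_nonneg fun i _ => norm_nonneg _]
  simp only [ofReal_norm, enorm]

/-- simultaneous Tietze extension preserving the `ℓ¹`-bound `λ`. -/
theorem stmt3 {K : Type u} [MetricSpace K] (W : Set K) (hW : IsClosed W)
    (lam : ℝ) (φ : ℕ → W → ℂ) (hcont : ∀ j, Continuous (φ j))
    (hbound : ∀ w : W, ∑' j : ℕ, (‖φ j w‖₊ : ℝ≥0∞) ≤ ENNReal.ofReal lam) :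
    ∃ ψ : ℕ → K → ℂ, (∀ j, Continuous (ψ j)) ∧
      (∀ j, ∀ w : W, ψ j w = φ j w) ∧
      ∀ k : K, ∑' j : ℕ, (‖ψ j k‖₊ : ℝ≥0∞) ≤ ENNReal.ofReal lam := by
  choose g hg using fun j => ContinuousMap.exists_restrict_eq hW ⟨φ j, hcont j⟩
  have hg_ext : ∀ j (w : W), g j w = φ j w := fun j w => ContinuousMap.congr_fun (hg j) w
  refine ⟨greedyClamp (max lam 0) (fun j => g j), continuous_greedyClamp fun j => (g j).continuous,
    fun j w => ?_, fun k => tsum_nnnorm_le_ofReal_iff.2 fun n => ?_⟩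
  · have hsum := tsum_nnnorm_le_ofReal_iff.1 (hbound w)
    simp only [← hg_ext] at hsum
    rw [greedyClamp_eq_of_sum_range_le hsum, hg_ext]
  · rw [← greedyUsed_eq_sum]
    exact greedyUsed_le (le_max_right _ _) n k
end

section
/- Let K be a metric space, f : K → ℂ a bounded function, n a positive integer, and δ_1, …, δ_n positive real numbers such that os_n(f,(δ_i)) ≠ ∅. Then if f ∈ D(K), one has ‖f‖_D ≥ Σ_{i=1}^n δ_i + sup{|f(x)| : x ∈ os_n(f,(δ_i))}. -/
open Filter Set Topology ENNReal

/-!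
Fix a representation `f = ∑ φ_j` and put `T k = ∑_j ‖φ_j k‖`, so that `‖f‖_D` is the infimum of
`sup T` over all representations and `‖f x‖ ≤ T x`. The heart of the proof is that oscillation
of `f|_L` at a point `x ∈ L` forces `T` to jump: `osc (f|_L) x + T x ≤ sup_L T`. Near `x` a
continuous head `∑_{j<m} ‖φ_j‖` stays close to its value at `x`; at a point `y` near `x` where
`f|_L` jumps, a continuous partial sum `∑_{j<m'} φ_j` approximates `f y` well, so a jump
`‖f z - f y‖` at nearby `z` can only come from the tail `∑_{j≥m'} ‖φ_j z‖`. Applying this along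
`os_0 ⊇ os_1 ⊇ ⋯ ⊇ os_n` gives `∑ δ_i + T x ≤ sup T` for every `x ∈ os_n`.
-/

noncomputable section DRepresentation

variable {K : Type*} {f : K → ℂ} {φ : ℕ → K → ℂ}

def normSum (φ : ℕ → K → ℂ) (k : K) : ℝ≥0∞ :=
  ∑' j, ‖φ j k‖ₑ

def headNormSum (φ : ℕ → K → ℂ) (m : ℕ) (k : K) : ℝ≥0∞ :=
  ∑ j ∈ Finset.range m, ‖φ j k‖ₑ

def tailNormSum (φ : ℕ → K → ℂ) (m : ℕ) (k : K) : ℝ≥0∞ :=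
  ∑' j, ‖φ (j + m) k‖ₑ

theorem headNormSum_add_tailNormSum (φ : ℕ → K → ℂ) (m : ℕ) (k : K) :
    headNormSum φ m k + tailNormSum φ m k = normSum φ k :=
  ENNReal.summable.sum_add_tsum_nat_add'

theorem headNormSum_mono (φ : ℕ → K → ℂ) (k : K) : Monotone fun m => headNormSum φ m k :=
  fun _ _ h => Finset.sum_le_sum_of_subset (Finset.range_subset_range.mpr h)

theorem normSum_eq_iSup_headNormSum (φ : ℕ → K → ℂ) (k : K) :
    normSum φ k = ⨆ m, headNormSum φ m k :=
  ENNReal.tsum_eq_iSup_nat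

theorem continuous_headNormSum [TopologicalSpace K] (hφ : ∀ j, Continuous (φ j)) (m : ℕ) :
    Continuous (headNormSum φ m) :=
  continuous_finsetSum _ fun j _ => (hφ j).enorm

theorem tendsto_tailNormSum {k : K} (hk : normSum φ k ≠ ⊤) :
    Tendsto (fun m => tailNormSum φ m k) atTop (𝓝 0) :=
  ENNReal.tendsto_sum_nat_add _ hk

theorem normSum_le_DBound [MetricSpace K] (φ : ℕ → K → ℂ) (k : K) : normSum φ k ≤ DBound φ :=
  le_iSup (normSum φ) k

theorem IsDRep.enorm_le_normSum [MetricSpace K] (hφ : IsDRep f φ) (k : K) :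
    ‖f k‖ₑ ≤ normSum φ k :=
  (hφ.2 k).tsum_eq ▸ enorm_tsum_le_tsum_enorm

theorem IsDRep.edist_sum_range_le_tailNormSum [MetricSpace K] (hφ : IsDRep f φ) (m : ℕ)
    (k : K) :
    edist (f k) (∑ j ∈ Finset.range m, φ j k) ≤ tailNormSum φ m k := by
  rw [edist_eq_enorm_sub]
  exact ((hasSum_nat_add_iff' m).mpr (hφ.2 k)).enorm_le_of_bounded ENNReal.summable.hasSum
    fun _ => le_rfl

theorem IsDRep.edist_le_tailNormSum_add [MetricSpace K] (hφ : IsDRep f φ) (m : ℕ) (y z : K) :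
    edist (f z) (f y) ≤ tailNormSum φ m z +
      edist (∑ j ∈ Finset.range m, φ j z) (∑ j ∈ Finset.range m, φ j y) + tailNormSum φ m y := by
  refine (edist_triangle4 _ _ _ _).trans (add_le_add (add_le_add ?_ le_rfl) ?_)
  · exact hφ.edist_sum_range_le_tailNormSum m z
  · exact edist_comm (f y) _ ▸ hφ.edist_sum_range_le_tailNormSum m y

theorem frequently_lt_of_lt_uscEnvWithin [MetricSpace K] {L : Set K} {g : K → ℝ≥0∞} {x : K}
    {c : ℝ≥0∞} (h : c < uscEnvWithin L g x) : ∃ᶠ y in 𝓝[L] x, c < g y := by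
  rw [frequently_nhdsWithin_iff, frequently_iff]
  intro U hU
  obtain ⟨y, hy, hcy⟩ : ∃ y ∈ U ∩ L, c < g y := by
    simpa only [lt_iSup_iff, exists_prop] using h.trans_le (biInf_le _ hU)
  exact ⟨y, hy.1, hcy, hy.2⟩

theorem frequently_frequently_lt_edist_of_lt_oscWithin [MetricSpace K] {L : Set K} {x : K}
    {c : ℝ≥0∞} (h : c < oscWithin f L x) :
    ∃ᶠ y in 𝓝[L] x, ∃ᶠ z in 𝓝[L] y, c < edist (f z) (f y) :=
  (frequently_lt_of_lt_uscEnvWithin h).mono fun y hy => by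
    simpa [oscNWithin, edist_eq_enorm_sub, enorm_eq_nnnorm] using
      frequently_lt_of_lt_uscEnvWithin hy

theorem IsDRep.add_headNormSum_le_of_lt_oscWithin [MetricSpace K] (hφ : IsDRep f φ)
    {L : Set K} {x : K} {c : ℝ≥0∞} (hc : c < oscWithin f L x) (m : ℕ) :
    c + headNormSum φ m x ≤ ⨆ w ∈ L, normSum φ w := by
  refine ENNReal.le_of_forall_pos_le_add fun ε hε hB => ?_
  set η : ℝ≥0∞ := ε / 3
  have hη : 0 < η := ENNReal.div_pos (by exact_mod_cast hε.ne') ENNReal.ofNat_ne_top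
  set U : Set K := {y | headNormSum φ m x < headNormSum φ m y + η}
  have hUo : IsOpen U := isOpen_lt continuous_const
    ((continuous_headNormSum hφ.1 m).add continuous_const)
  have hxU : x ∈ U :=
    ENNReal.lt_add_right (ENNReal.sum_ne_top.mpr fun _ _ => enorm_ne_top) hη.ne'
  have hnear_x : ∀ᶠ y in 𝓝[L] x, y ∈ U ∧ y ∈ L :=
    (eventually_nhdsWithin_of_eventually_nhds (hUo.mem_nhds hxU)).and eventually_mem_nhdsWithin
  obtain ⟨y, hy, hyU, hyL⟩ :=
    ((frequently_frequently_lt_edist_of_lt_oscWithin hc).and_eventually hnear_x).exists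
  have hyT : normSum φ y ≠ ⊤ := ((le_biSup (normSum φ) hyL).trans_lt hB).ne
  obtain ⟨m', hmm', hm'⟩ := ((eventually_ge_atTop m).and
    ((tendsto_tailNormSum hyT).eventually (gt_mem_nhds hη))).exists
  set S : K → ℂ := fun k => ∑ j ∈ Finset.range m', φ j k
  have hS : Continuous S := continuous_finsetSum _ fun j _ => hφ.1 j
  have hnear_y : ∀ᶠ z in 𝓝 y, z ∈ U ∧ edist (S z) (S y) < η :=
    Filter.Eventually.and (hUo.mem_nhds hyU) (hS.tendsto y (Metric.eball_mem_nhds (S y) hη))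
  obtain ⟨z, ⟨hz, hzU, hzS⟩, hzL⟩ := ((hy.and_eventually (eventually_nhdsWithin_of_eventually_nhds
    hnear_y)).and_eventually eventually_mem_nhdsWithin).exists
  have hjump : edist (f z) (f y) ≤ tailNormSum φ m' z + η + η :=
    (hφ.edist_le_tailNormSum_add m' y z).trans (add_le_add (add_le_add le_rfl hzS.le) hm'.le)
  calc c + headNormSum φ m x ≤ (tailNormSum φ m' z + η + η) + (headNormSum φ m' z + η) :=
        add_le_add (hz.le.trans hjump)
          (hzU.le.trans (add_le_add (headNormSum_mono φ z hmm') le_rfl))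
    _ = normSum φ z + (η + η + η) := by
        rw [← headNormSum_add_tailNormSum φ m' z]; ring
    _ ≤ (⨆ w ∈ L, normSum φ w) + ε := by
        rw [ENNReal.add_thirds]; gcongr; exact le_biSup (normSum φ) hzL

theorem IsDRep.oscWithin_add_normSum_le [MetricSpace K] (hφ : IsDRep f φ) {L : Set K} {x : K}
    (hx : x ∈ L) : oscWithin f L x + normSum φ x ≤ ⨆ w ∈ L, normSum φ w := by
  rcases eq_or_ne (oscWithin f L x) 0 with h0 | h0
  · rw [h0, zero_add]
    exact le_biSup (normSum φ) hx
  rw [← ENNReal.iSup_lt_eq_self (oscWithin f L x),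
    ENNReal.biSup_add' (p := (· < oscWithin f L x)) ⟨0, pos_iff_ne_zero.mpr h0⟩]
  refine iSup₂_le fun c hc => ?_
  rw [normSum_eq_iSup_headNormSum, ENNReal.add_iSup]
  exact iSup_le (hφ.add_headNormSum_le_of_lt_oscWithin hc)

theorem IsDRep.ofReal_sum_add_normSum_le_DBound [MetricSpace K] (hφ : IsDRep f φ) (δ : ℕ → ℝ) :
    ∀ t, ∀ x ∈ osSets f δ t, ENNReal.ofReal (∑ i ∈ Finset.range t, δ i) + normSum φ x ≤ DBound φ
  | 0, x, _ => by simpa using normSum_le_DBound φ x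
  | t + 1, x, ⟨hxL, hxosc⟩ =>
    calc ENNReal.ofReal (∑ i ∈ Finset.range (t + 1), δ i) + normSum φ x
        ≤ ENNReal.ofReal (∑ i ∈ Finset.range t, δ i) + (ENNReal.ofReal (δ t) + normSum φ x) := by
          rw [Finset.sum_range_succ, ← add_assoc]
          gcongr
          exact ENNReal.ofReal_add_le
      _ ≤ ENNReal.ofReal (∑ i ∈ Finset.range t, δ i) + ⨆ w ∈ osSets f δ t, normSum φ w := by
          gcongr
          exact (add_le_add hxosc le_rfl).trans (hφ.oscWithin_add_normSum_le hxL)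
      _ = ⨆ w ∈ osSets f δ t, (ENNReal.ofReal (∑ i ∈ Finset.range t, δ i) + normSum φ w) :=
          ENNReal.add_biSup ⟨x, hxL⟩ _
      _ ≤ DBound φ := iSup₂_le (hφ.ofReal_sum_add_normSum_le_DBound δ t)

end DRepresentation

theorem stmt4_general {K : Type u} [MetricSpace K] (f : K → ℂ) (n : ℕ) (δ : ℕ → ℝ)
    (hne : (osSets f δ n).Nonempty) :
    ENNReal.ofReal (∑ i ∈ Finset.range n, δ i) +
      (⨆ x ∈ osSets f δ n, (‖f x‖₊ : ℝ≥0∞)) ≤ DNorm f := by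
  refine le_iInf₂ fun φ hφ => ?_
  rw [ENNReal.add_biSup hne]
  exact iSup₂_le fun x hx => (add_le_add le_rfl (hφ.enorm_le_normSum x)).trans
    (hφ.ofReal_sum_add_normSum_le_DBound δ n x hx)

/-- if `os_n(f,(δ_i)) ≠ ∅` then
`‖f‖_D ≥ Σ_{i=1}^n δ_i + sup {|f(x)| : x ∈ os_n(f,(δ_i))}`. -/
theorem stmt4 {K : Type u} [MetricSpace K] (f : K → ℂ)
    (hb : ∃ C : ℝ, ∀ k, ‖f k‖ ≤ C) (n : ℕ) (hn : 0 < n)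
    (δ : ℕ → ℝ) (hδ : ∀ i < n, 0 < δ i)
    (hne : (osSets f δ n).Nonempty) (hf : MemD f) :
    ENNReal.ofReal (∑ i ∈ Finset.range n, δ i) +
      (⨆ x ∈ osSets f δ n, (‖f x‖₊ : ℝ≥0∞)) ≤ DNorm f :=
  stmt4_general f n δ hne
end

section
/- Let K be a metric space, λ > 0, and f : K → ℂ a bounded function. (a) If for every x ∈ K there is an open neighborhood U_x of x such that f|_{U_x} ∈ D(U_x) and ‖f|_{U_x}‖_{D(U_x)} ≤ λ, then f ∈ D(K) and ‖f‖_{D(K)} ≤ λ. (b) If for every x ∈ K there is an open neighborhood U_x of x such that f|_{U_x} ∈ D(U_x) and ‖f|_{U_x}‖_{qD(U_x)} ≤ λ, then ‖f‖_{qD(K)} ≤ λ. -/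
open Filter Set Topology ENNReal

/-!
A locally finite partition of unity `(ρ_i)` subordinate to the neighbourhoods `U_i` glues local
representations `f|_{U_i} = Σ_j φ^i_j` into the global one `f = Σ_j Σ_i ρ_i φ^i_j`: for each `j`
the inner sum is locally finite, hence continuous, and
`Σ_j |Σ_i ρ_i φ^i_j| ≤ Σ_i ρ_i Σ_j |φ^i_j| ≤ λ` because `Σ_i ρ_i = 1`.
For the quotient seminorm one glues the continuous correctors `χ_i` in the same way; they are
uniformly bounded by `sup |f| + λ`, so their glued sum is again bounded.
-/

section ExtendByZero

variable {X E : Type*} [Zero E] {U : Set X}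

open scoped Classical in
noncomputable def extendByZero (g : U → E) (x : X) : E :=
  if h : x ∈ U then g ⟨x, h⟩ else 0

theorem extendByZero_of_mem (g : U → E) {x : X} (hx : x ∈ U) :
    extendByZero g x = g ⟨x, hx⟩ := by
  rw [extendByZero, dif_pos hx]

theorem extendByZero_of_notMem (g : U → E) {x : X} (hx : x ∉ U) : extendByZero g x = 0 := by
  rw [extendByZero, dif_neg hx]

theorem extendByZero_val (g : U → E) (u : U) : extendByZero g u = g u :=
  extendByZero_of_mem g u.2

theorem continuousOn_extendByZero [TopologicalSpace X] [TopologicalSpace E] {g : U → E}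
    (hg : Continuous g) : ContinuousOn (extendByZero g) U := by
  rw [continuousOn_iff_continuous_domRestrict]
  convert hg using 1
  funext u
  exact extendByZero_val g u

theorem extendByZero_sub {E : Type*} [AddGroup E] (g h : U → E) (x : X) :
    extendByZero (g - h) x = extendByZero g x - extendByZero h x := by
  by_cases hx : x ∈ U
  · simp only [extendByZero_of_mem _ hx, Pi.sub_apply]
  · simp only [extendByZero_of_notMem _ hx, sub_zero]

theorem hasSum_extendByZero {E : Type*} [AddCommMonoid E] [TopologicalSpace E]
    {φ : ℕ → U → E} {g : U → E} (hφ : ∀ u, HasSum (fun j => φ j u) (g u)) (x : X) :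
    HasSum (fun j => extendByZero (φ j) x) (extendByZero g x) := by
  by_cases hx : x ∈ U
  · simpa only [extendByZero_of_mem _ hx] using hφ ⟨x, hx⟩
  · simpa only [extendByZero_of_notMem _ hx] using hasSum_zero

end ExtendByZero

namespace PartitionOfUnity

variable {ι X E : Type*} [TopologicalSpace X] {s : Set X} {U : ι → Set X}
  (ρ : PartitionOfUnity ι X s)

section Module

variable [AddCommGroup E] [Module ℝ E]

noncomputable def glue (g : ∀ i, U i → E) (x : X) : E :=
  ∑ᶠ i, ρ i x • extendByZero (g i) x

theorem glue_eq_sum (g : ∀ i, U i → E) (x : X) :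
    ρ.glue g x = ∑ i ∈ ρ.finsupport x, ρ i x • extendByZero (g i) x :=
  (ρ.sum_finsupport_smul_eq_finsum fun i => extendByZero (g i)).symm

theorem glue_sub (g h : ∀ i, U i → E) :
    ρ.glue (fun i => g i - h i) = ρ.glue g - ρ.glue h := by
  funext x
  simp only [glue_eq_sum, Pi.sub_apply, extendByZero_sub, smul_sub, Finset.sum_sub_distrib]

theorem glue_restrict (ρ : PartitionOfUnity ι X) (hρ : ρ.IsSubordinate U) (f : X → E) :
    ρ.glue (fun i (u : U i) => f u) = f := by
  funext x
  have hmem : ∀ i ∈ ρ.finsupport x, x ∈ U i := fun i hi =>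
    hρ i (subset_tsupport _ ((ρ.mem_finsupport x).1 hi))
  have hterm : ∀ i ∈ ρ.finsupport x, ρ i x • extendByZero (fun u : U i => f u) x = ρ i x • f x :=
    fun i hi => by rw [extendByZero_of_mem _ (hmem i hi)]
  rw [glue_eq_sum, Finset.sum_congr rfl hterm, ← Finset.sum_smul,
    ρ.sum_finsupport (Set.mem_univ x), one_smul]

theorem hasSum_glue [TopologicalSpace E] [ContinuousAdd E] [ContinuousConstSMul ℝ E]
    {φ : ∀ i, ℕ → U i → E} {g : ∀ i, U i → E} (hφ : ∀ i u, HasSum (fun j => φ i j u) (g i u))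
    (x : X) :
    HasSum (fun j => ρ.glue (fun i => φ i j) x) (ρ.glue g x) := by
  simp only [glue_eq_sum]
  exact hasSum_sum fun i _ => (hasSum_extendByZero (hφ i) x).const_smul _

theorem continuous_glue [TopologicalSpace E] [ContinuousAdd E] [ContinuousSMul ℝ E]
    (hU : ∀ i, IsOpen (U i)) (hρ : ρ.IsSubordinate U) {g : ∀ i, U i → E}
    (hg : ∀ i, Continuous (g i)) : Continuous (ρ.glue g) :=
  hρ.continuous_finsum_smul hU fun i => continuousOn_extendByZero (hg i)

end Module

theorem sum_finsupport_ofReal_mul_le (x : X) {a : ι → ℝ≥0∞} {B : ℝ≥0∞}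
    (ha : ∀ i, a i ≤ B) : ∑ i ∈ ρ.finsupport x, ENNReal.ofReal (ρ i x) * a i ≤ B := by
  have hsum : ∑ i ∈ ρ.finsupport x, ρ i x ≤ 1 := by
    rw [← finsum_eq_sum_of_support_subset _ (ρ.coe_finsupport x).superset]
    exact ρ.sum_le_one x
  calc ∑ i ∈ ρ.finsupport x, ENNReal.ofReal (ρ i x) * a i
      ≤ ∑ i ∈ ρ.finsupport x, ENNReal.ofReal (ρ i x) * B := by gcongr; exact ha _
    _ = ENNReal.ofReal (∑ i ∈ ρ.finsupport x, ρ i x) * B := by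
      rw [← Finset.sum_mul, ENNReal.ofReal_sum_of_nonneg fun i _ => ρ.nonneg i x]
    _ ≤ 1 * B := by gcongr; exact ENNReal.ofReal_le_one.2 hsum
    _ = B := one_mul B

section Normed

variable [NormedAddCommGroup E] [NormedSpace ℝ E]

theorem enorm_glue_le_sum (g : ∀ i, U i → E) (x : X) :
    ‖ρ.glue g x‖ₑ ≤ ∑ i ∈ ρ.finsupport x, ENNReal.ofReal (ρ i x) * ‖extendByZero (g i) x‖ₑ := by
  rw [glue_eq_sum]
  refine (enorm_sum_le _ fun i => ρ i x • extendByZero (g i) x).trans_eq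
    (Finset.sum_congr rfl fun i _ => ?_)
  rw [enorm_smul, Real.enorm_eq_ofReal (ρ.nonneg i x)]

theorem enorm_glue_le {g : ∀ i, U i → E} {B : ℝ≥0∞} (hg : ∀ i u, ‖g i u‖ₑ ≤ B) (x : X) :
    ‖ρ.glue g x‖ₑ ≤ B := by
  refine (ρ.enorm_glue_le_sum g x).trans (ρ.sum_finsupport_ofReal_mul_le x ?_)
  intro i
  by_cases hx : x ∈ U i
  · rw [extendByZero_of_mem _ hx]; exact hg i _
  · simp [extendByZero_of_notMem _ hx]

theorem tsum_enorm_glue_le {φ : ∀ i, ℕ → U i → E} {B : ℝ≥0∞}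
    (hφ : ∀ i u, ∑' j, ‖φ i j u‖ₑ ≤ B) (x : X) :
    ∑' j, ‖ρ.glue (fun i => φ i j) x‖ₑ ≤ B := by
  calc ∑' j, ‖ρ.glue (fun i => φ i j) x‖ₑ
      ≤ ∑' j, ∑ i ∈ ρ.finsupport x, ENNReal.ofReal (ρ i x) * ‖extendByZero (φ i j) x‖ₑ :=
        ENNReal.tsum_le_tsum fun j => ρ.enorm_glue_le_sum _ x
    _ = ∑ i ∈ ρ.finsupport x, ENNReal.ofReal (ρ i x) * ∑' j, ‖extendByZero (φ i j) x‖ₑ := by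
        rw [Summable.tsum_finsetSum fun _ _ => ENNReal.summable]
        simp only [ENNReal.tsum_mul_left]
    _ ≤ B := by
        refine ρ.sum_finsupport_ofReal_mul_le x fun i => ?_
        by_cases hx : x ∈ U i
        · simpa only [extendByZero_of_mem _ hx] using hφ i ⟨x, hx⟩
        · simp [extendByZero_of_notMem _ hx]

end Normed

end PartitionOfUnity

section DNorm

variable {K : Type*} [MetricSpace K]

theorem enorm_le_DBound {f : K → ℂ} {φ : ℕ → K → ℂ} (hφ : IsDRep f φ) (k : K) :
    ‖f k‖ₑ ≤ DBound φ :=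
  calc ‖f k‖ₑ ≤ ∑' j, ‖φ j k‖ₑ :=
        (hφ.2 k).enorm_le_of_bounded ENNReal.summable.hasSum fun _ => le_rfl
    _ ≤ DBound φ := le_iSup (fun k => ∑' j, (‖φ j k‖₊ : ℝ≥0∞)) k

theorem DNorm_le_DBound {f : K → ℂ} {φ : ℕ → K → ℂ} (hφ : IsDRep f φ) : DNorm f ≤ DBound φ :=
  iInf₂_le φ hφ

theorem enorm_le_DNorm (f : K → ℂ) (k : K) : ‖f k‖ₑ ≤ DNorm f :=
  le_iInf₂ fun _ hφ => enorm_le_DBound hφ k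

theorem exists_isDRep_DBound_lt {f : K → ℂ} {c : ℝ≥0∞} (h : DNorm f < c) :
    ∃ φ, IsDRep f φ ∧ DBound φ < c := by
  simpa only [DNorm, iInf_lt_iff, exists_prop] using h

theorem memD_of_DNorm_lt_top {f : K → ℂ} (h : DNorm f < ⊤) : MemD f :=
  exists_isDRep_DBound_lt h

theorem exists_continuous_DNorm_sub_lt {f : K → ℂ} {c : ℝ≥0∞} (h : qDNorm f < c) :
    ∃ χ : K → ℂ, Continuous χ ∧ DNorm (f - χ) < c := by
  simp only [qDNorm, iInf_lt_iff, exists_prop] at h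
  obtain ⟨χ, ⟨hχ, -⟩, hlt⟩ := h
  exact ⟨χ, hχ, hlt⟩

theorem qDNorm_le_DNorm_sub (f : K → ℂ) {χ : K → ℂ} (hχ : Continuous χ) {B : ℝ≥0∞}
    (hB : B ≠ ⊤) (hχB : ∀ k, ‖χ k‖ₑ ≤ B) : qDNorm f ≤ DNorm (f - χ) :=
  iInf₂_le χ ⟨hχ, B.toReal, fun k => toReal_enorm (χ k) ▸ ENNReal.toReal_mono hB (hχB k)⟩

end DNorm

namespace PartitionOfUnity

variable {ι K : Type*} [MetricSpace K] {s : Set K} {U : ι → Set K}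
  (ρ : PartitionOfUnity ι K s)

theorem isDRep_glue (hU : ∀ i, IsOpen (U i)) (hρ : ρ.IsSubordinate U) {g : ∀ i, U i → ℂ}
    {φ : ∀ i, ℕ → U i → ℂ} (hφ : ∀ i, IsDRep (g i) (φ i)) :
    IsDRep (ρ.glue g) fun j => ρ.glue fun i => φ i j :=
  ⟨fun j => ρ.continuous_glue hU hρ fun i => (hφ i).1 j, ρ.hasSum_glue fun i => (hφ i).2⟩

theorem DBound_glue_le {φ : ∀ i, ℕ → U i → ℂ} {B : ℝ≥0∞} (hφ : ∀ i, DBound (φ i) ≤ B) :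
    DBound (fun j => ρ.glue fun i => φ i j) ≤ B :=
  iSup_le <| ρ.tsum_enorm_glue_le fun i u =>
    (le_iSup (fun u => ∑' j, (‖φ i j u‖₊ : ℝ≥0∞)) u).trans (hφ i)

theorem DNorm_glue_le (hU : ∀ i, IsOpen (U i)) (hρ : ρ.IsSubordinate U) {g : ∀ i, U i → ℂ}
    {c : ℝ≥0∞} (hg : ∀ i, DNorm (g i) ≤ c) : DNorm (ρ.glue g) ≤ c := by
  refine ENNReal.le_of_forall_pos_le_add fun ε hε hc => ?_
  have hlt : ∀ i, DNorm (g i) < c + ε := fun i =>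
    (hg i).trans_lt (ENNReal.lt_add_right hc.ne (by simpa using hε.ne'))
  choose φ hφ hφB using fun i => exists_isDRep_DBound_lt (hlt i)
  exact (DNorm_le_DBound (ρ.isDRep_glue hU hρ hφ)).trans (ρ.DBound_glue_le fun i => (hφB i).le)

end PartitionOfUnity

theorem exists_partitionOfUnity_isSubordinate_of_forall {X : Type*} [TopologicalSpace X]
    [NormalSpace X] [ParacompactSpace X] {P : Set X → Prop}
    (h : ∀ x, ∃ U, IsOpen U ∧ x ∈ U ∧ P U) :
    ∃ (U : X → Set X) (ρ : PartitionOfUnity X X),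
      (∀ x, IsOpen (U x)) ∧ ρ.IsSubordinate U ∧ ∀ x, P (U x) := by
  choose U hU hxU hP using h
  obtain ⟨ρ, hρ⟩ := PartitionOfUnity.exists_isSubordinate isClosed_univ U hU
    fun x _ => Set.mem_iUnion.2 ⟨x, hxU x⟩
  exact ⟨U, ρ, hU, hρ, hP⟩

section Localization

variable {K : Type*} [MetricSpace K] {f : K → ℂ} {c : ℝ≥0∞}

theorem DNorm_le_of_forall_nhds
    (h : ∀ x, ∃ U : Set K, IsOpen U ∧ x ∈ U ∧ DNorm (fun y : U => f y) ≤ c) : DNorm f ≤ c := by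
  obtain ⟨U, ρ, hU, hρ, hD⟩ := exists_partitionOfUnity_isSubordinate_of_forall h
  rw [← ρ.glue_restrict hρ f]
  exact ρ.DNorm_glue_le hU hρ hD

theorem qDNorm_le_of_forall_nhds (hf : ∃ C : ℝ, ∀ k, ‖f k‖ ≤ C)
    (h : ∀ x, ∃ U : Set K, IsOpen U ∧ x ∈ U ∧ qDNorm (fun y : U => f y) ≤ c) : qDNorm f ≤ c := by
  obtain ⟨C, hC⟩ := hf
  obtain ⟨U, ρ, hU, hρ, hq⟩ := exists_partitionOfUnity_isSubordinate_of_forall h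
  refine ENNReal.le_of_forall_pos_le_add fun ε hε hc => ?_
  have hlt : ∀ x, qDNorm (fun y : U x => f y) < c + ε := fun x =>
    (hq x).trans_lt (ENNReal.lt_add_right hc.ne (by simpa using hε.ne'))
  choose χ hχ hfχ using fun x => exists_continuous_DNorm_sub_lt (hlt x)
  set B := ENNReal.ofReal C + (c + ε)
  have hχB : ∀ x (u : U x), ‖χ x u‖ₑ ≤ B := fun x u =>
    calc ‖χ x u‖ₑ = ‖f u - (f u - χ x u)‖ₑ := by rw [sub_sub_cancel (f u) (χ x u)]
      _ ≤ ‖f u‖ₑ + ‖f u - χ x u‖ₑ := enorm_sub_le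
      _ ≤ B := add_le_add (by simpa only [← ofReal_norm] using ENNReal.ofReal_le_ofReal (hC u))
          ((enorm_le_DNorm _ u).trans (hfχ x).le)
  have hB : B ≠ ⊤ := by simp [B, hc.ne]
  calc qDNorm f ≤ DNorm (f - ρ.glue χ) :=
        qDNorm_le_DNorm_sub f (ρ.continuous_glue hU hρ hχ) hB (ρ.enorm_glue_le hχB)
    _ = DNorm (ρ.glue fun x => (fun y : U x => f y) - χ x) := by
        rw [PartitionOfUnity.glue_sub, ρ.glue_restrict hρ]
    _ ≤ c + ε := ρ.DNorm_glue_le hU hρ fun x => (hfχ x).le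

end Localization

theorem stmt7_general {K : Type u} [MetricSpace K] (lam : ℝ)
    (f : K → ℂ) (hb : ∃ C : ℝ, ∀ k, ‖f k‖ ≤ C) :
    ((∀ x : K, ∃ U : Set K, IsOpen U ∧ x ∈ U ∧
        MemD (fun y : U => f y.1) ∧ DNorm (fun y : U => f y.1) ≤ ENNReal.ofReal lam) →
      MemD f ∧ DNorm f ≤ ENNReal.ofReal lam) ∧
    ((∀ x : K, ∃ U : Set K, IsOpen U ∧ x ∈ U ∧
        MemD (fun y : U => f y.1) ∧ qDNorm (fun y : U => f y.1) ≤ ENNReal.ofReal lam) →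
      qDNorm f ≤ ENNReal.ofReal lam) := by
  refine ⟨fun h => ?_, fun h => qDNorm_le_of_forall_nhds hb fun x =>
    (h x).imp fun _ hU => ⟨hU.1, hU.2.1, hU.2.2.2⟩⟩
  have hD : DNorm f ≤ ENNReal.ofReal lam := DNorm_le_of_forall_nhds fun x =>
    (h x).imp fun _ hU => ⟨hU.1, hU.2.1, hU.2.2.2⟩
  exact ⟨memD_of_DNorm_lt_top (hD.trans_lt ENNReal.ofReal_lt_top), hD⟩

/-- localization principle for the `D`-norm and the quotient `D`-seminorm. -/
theorem stmt7 {K : Type u} [MetricSpace K] (lam : ℝ) (hlam : 0 < lam)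
    (f : K → ℂ) (hb : ∃ C : ℝ, ∀ k, ‖f k‖ ≤ C) :
    ((∀ x : K, ∃ U : Set K, IsOpen U ∧ x ∈ U ∧
        MemD (fun y : U => f y.1) ∧ DNorm (fun y : U => f y.1) ≤ ENNReal.ofReal lam) →
      MemD f ∧ DNorm f ≤ ENNReal.ofReal lam) ∧
    ((∀ x : K, ∃ U : Set K, IsOpen U ∧ x ∈ U ∧
        MemD (fun y : U => f y.1) ∧ qDNorm (fun y : U => f y.1) ≤ ENNReal.ofReal lam) →
      qDNorm f ≤ ENNReal.ofReal lam) :=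
  stmt7_general lam f hb
end
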